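/- arXiv:2106.04061 — 4 statements merged into one kernel-verified Lean document; each statement's English description precedes it below -/
import Mathlib

section
/- Let d ≥ 1, r ∈ {1,2}, 1 ≤ n ≤ d−1, and for n+1 ≤ k ≤ d let H_k = [[α_k, β_k],[β_k, γ_k]] be real symmetric matrices with α_k·γ_k − β_k² = 1. Put X = e^{i(r/2)z}, Y = e^{−i(r/2)z} and let M^n(z) := ∏_{k=n+1}^d [[cos((r/2)z) − β_k sin((r/2)z), −γ_k sin((r/2)z)],[α_k sin((r/2)z), cos((r/2)z) + β_k sin((r/2)z)]]. Then there exist complex numbers N_{ab}^n(ν) (a,b ∈ {1,2}, 1 ≤ ν ≤ d−n), depending only on the matrices H_{n+1},...,H_d, such that each entry of M^n(z) satisfies M_{ab}^n(z) = Σ_{ν=1}^{d−n}[N_{ab}^n(ν)·X^ν·Y^{d−n−ν} + conj(N_{ab}^n(ν))·X^{d−n−ν}·Y^ν] for every z ∈ ℂ. -/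
open Complex Matrix

noncomputable section

/-- The transfer matrix factor
`[[cos((r/2)z) − β_k sin((r/2)z), −γ_k sin((r/2)z)],[α_k sin((r/2)z), cos((r/2)z) + β_k sin((r/2)z)]]`. -/
def transferFactor (r : ℕ) (α β γ : ℝ) (z : ℂ) : Matrix (Fin 2) (Fin 2) ℂ :=
  !![Complex.cos ((r / 2 : ℝ) * z) - (β : ℂ) * Complex.sin ((r / 2 : ℝ) * z),
      -(γ : ℂ) * Complex.sin ((r / 2 : ℝ) * z);
    (α : ℂ) * Complex.sin ((r / 2 : ℝ) * z),
      Complex.cos ((r / 2 : ℝ) * z) + (β : ℂ) * Complex.sin ((r / 2 : ℝ) * z)]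

/-- The ordered product `M^n(z) = ∏_{k=n+1}^d` of the transfer matrix factors. -/
def transferProd (d r n : ℕ) (α β γ : ℕ → ℝ) (z : ℂ) : Matrix (Fin 2) (Fin 2) ℂ :=
  (((List.range (d - n)).map (fun i => transferFactor r (α (n + 1 + i)) (β (n + 1 + i))
      (γ (n + 1 + i)) z))).prod

private lemma prodForm (L : List (Matrix (Fin 2) (Fin 2) ℂ)) :
    ∃ P : ℕ → Matrix (Fin 2) (Fin 2) ℂ,
      (∀ ν, L.length < ν → P ν = 0) ∧
      (∀ ν ≤ L.length, (P ν).map (starRingEnd ℂ) = P (L.length - ν)) ∧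
      (∀ w : ℂ,
        (L.map (fun C => Complex.exp (Complex.I * w) • C
            + Complex.exp (-(Complex.I * w)) • C.map (starRingEnd ℂ))).prod
          = ∑ ν ∈ Finset.range (L.length + 1),
              (Complex.exp (Complex.I * w) ^ ν
                * Complex.exp (-(Complex.I * w)) ^ (L.length - ν)) • P ν) := by
  induction L with
  | nil =>
      refine ⟨fun ν => if ν = 0 then 1 else 0, ?_, ?_, ?_⟩
      · intro ν hν; simp at hν ⊢; omega
      · intro ν hν
        simp only [List.length_nil, Nat.le_zero] at hν
        subst hν
        simp [Matrix.map_one]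
      · intro w; simp
  | cons C L ih =>
      obtain ⟨P, hP0, hPsym, hPprod⟩ := ih
      set m := L.length with hm
      refine ⟨fun ν => (if ν = 0 then 0 else C * P (ν - 1))
        + C.map (starRingEnd ℂ) * P ν, ?_, ?_, ?_⟩
      · intro ν hν
        simp only [List.length_cons] at hν
        have h1 : P ν = 0 := hP0 ν (by omega)
        have h2 : P (ν - 1) = 0 := hP0 _ (by omega)
        simp [h1, h2]
      · intro ν hν
        have hadd : ∀ A B : Matrix (Fin 2) (Fin 2) ℂ,
            (A + B).map (starRingEnd ℂ) = A.map (starRingEnd ℂ) + B.map (starRingEnd ℂ) :=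
          fun A B => Matrix.map_add _ (fun x y => map_add (starRingEnd ℂ) x y) A B
        have hcc : ∀ A : Matrix (Fin 2) (Fin 2) ℂ,
            (A.map (starRingEnd ℂ)).map (starRingEnd ℂ) = A := by
          intro A; ext i j; simp [Matrix.map_apply]
        simp only [List.length_cons] at hν ⊢
        rw [← hm] at hν ⊢
        rw [hadd]
        rcases Nat.eq_zero_or_pos ν with h0 | h0
        · subst h0
          have := hPsym 0 (Nat.zero_le _)
          simp only [Nat.sub_zero] at this
          simp [Matrix.map_mul, this, hP0 (m + 1) (by omega), hcc]
        · have hne : ν ≠ 0 := by omega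
          have hsub : m + 1 - ν ≠ 0 → True := fun _ => trivial
          rcases Nat.lt_or_ge ν (m + 1) with hlt | hge
          · -- 1 ≤ ν ≤ m
            have hνm : ν ≤ m := by omega
            have h1 : (P (ν - 1)).map (starRingEnd ℂ) = P (m - (ν - 1)) := hPsym _ (by omega)
            have h2 : (P ν).map (starRingEnd ℂ) = P (m - ν) := hPsym _ hνm
            have e1 : m - (ν - 1) = m + 1 - ν := by omega
            have e2 : m + 1 - ν ≠ 0 := by omega
            have e3 : m + 1 - ν - 1 = m - ν := by omega
            simp only [if_neg hne, Matrix.map_mul, h1, h2, e1, if_neg e2, e3, hcc]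
            abel
          · -- ν = m + 1
            have hν1 : ν = m + 1 := by omega
            subst hν1
            have h1 : (P m).map (starRingEnd ℂ) = P 0 := by
              have := hPsym m le_rfl; simpa using this
            have h2 : P (m + 1) = 0 := hP0 _ (by omega)
            simp [Matrix.map_mul, h1, h2, hcc]
      · intro w
        set X := Complex.exp (Complex.I * w) with hX
        set Y := Complex.exp (-(Complex.I * w)) with hY
        simp only [List.map_cons, List.prod_cons, List.length_cons]
        rw [← hm]
        rw [hPprod w]
        rw [Finset.mul_sum]
        have expand : ∀ ν ∈ Finset.range (m + 1),
            (X • C + Y • C.map (starRingEnd ℂ)) * ((X ^ ν * Y ^ (m - ν)) • P ν)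
            = (X ^ (ν + 1) * Y ^ (m - ν)) • (C * P ν)
              + (X ^ ν * Y ^ (m + 1 - ν)) • (C.map (starRingEnd ℂ) * P ν) := by
          intro ν hν
          simp only [Finset.mem_range] at hν
          have : m + 1 - ν = (m - ν) + 1 := by omega
          rw [this]
          rw [add_mul, Matrix.smul_mul, Matrix.smul_mul, Matrix.mul_smul, Matrix.mul_smul,
            smul_smul, smul_smul]
          module
        rw [Finset.sum_congr rfl expand, Finset.sum_add_distrib]
        -- RHS
        simp only [smul_add]
        rw [Finset.sum_add_distrib]
        congr 1
        · -- first sums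
          have hrw := @Finset.sum_range_succ' (Matrix (Fin 2) (Fin 2) ℂ) _
              (fun ν => (X ^ ν * Y ^ (m + 1 - ν)) •
              ((if ν = 0 then 0 else C * P (ν - 1)) : Matrix (Fin 2) (Fin 2) ℂ)) (m + 1)
          rw [hrw]
          have hzero : (X ^ 0 * Y ^ (m + 1 - 0)) •
              ((if (0:ℕ) = 0 then 0 else C * P (0 - 1)) : Matrix (Fin 2) (Fin 2) ℂ) = 0 := by
            rw [if_pos rfl]; simp
          rw [hzero, add_zero]
          simp only [Nat.add_sub_cancel]
          refine Finset.sum_congr rfl fun ν hν => ?_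
          have h1 : m + 1 - (ν + 1) = m - ν := by omega
          rw [h1, if_neg (Nat.succ_ne_zero ν)]
        · -- second sums
          have htop : P (m + 1) = 0 := hP0 _ (by omega)
          rw [Finset.sum_range_succ (fun x => (X ^ x * Y ^ (m + 1 - x)) •
              (C.map (starRingEnd ℂ) * P x)) (m + 1)]
          simp [htop]

private lemma factor_eq (r : ℕ) (α β γ : ℝ) (z : ℂ) :
    transferFactor r α β γ z
      = Complex.exp (Complex.I * (((r : ℂ) / 2) * z)) •
          (!![(1 + Complex.I * β) / 2, Complex.I * γ / 2;
            -(Complex.I * α) / 2, (1 - Complex.I * β) / 2] : Matrix (Fin 2) (Fin 2) ℂ)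
        + Complex.exp (-(Complex.I * (((r : ℂ) / 2) * z))) •
          ((!![(1 + Complex.I * β) / 2, Complex.I * γ / 2;
            -(Complex.I * α) / 2, (1 - Complex.I * β) / 2] : Matrix (Fin 2) (Fin 2) ℂ).map
              (starRingEnd ℂ)) := by
  have hu : ((r / 2 : ℝ) : ℂ) * z = ((r : ℂ) / 2) * z := by push_cast; ring
  have hI : Complex.I * (((r : ℂ) / 2) * z) = (((r / 2 : ℝ) : ℂ) * z) * Complex.I := by
    rw [hu]; ring
  ext a b
  fin_cases a <;> fin_cases b <;>
    simp [transferFactor, Matrix.map_apply, Complex.cos, Complex.sin, hI, map_div₀,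
      Complex.conj_I, map_ofNat] <;> ring

/-- Each entry of `M^n(z)` is a trigonometric polynomial of the form
`Σ_{ν=1}^{d−n} [N_{ab}^n(ν)X^ν Y^{d−n−ν} + conj(N_{ab}^n(ν)) X^{d−n−ν} Y^ν]`
with `X = e^{i(r/2)z}`, `Y = e^{−i(r/2)z}`, where the coefficients `N_{ab}^n(ν)`
depend only on the matrices `H_{n+1}, …, H_d`. -/
theorem transferProd_entries_trigPoly
    (d : ℕ) (hd : 1 ≤ d) (r : ℕ) (hr : r = 1 ∨ r = 2) (n : ℕ) (hn1 : 1 ≤ n) (hnd : n ≤ d - 1)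
    (α β γ : ℕ → ℝ) (hdet : ∀ k, n + 1 ≤ k → k ≤ d → α k * γ k - (β k) ^ 2 = 1) :
    ∃ N : Fin 2 → Fin 2 → ℕ → ℂ, ∀ z : ℂ, ∀ a b : Fin 2,
      transferProd d r n α β γ z a b
        = ∑ ν ∈ Finset.Icc 1 (d - n),
            (N a b ν * Complex.exp (Complex.I * ((r : ℂ) / 2) * z) ^ ν
                * Complex.exp (-(Complex.I * ((r : ℂ) / 2) * z)) ^ (d - n - ν)
              + (starRingEnd ℂ) (N a b ν)
                * Complex.exp (Complex.I * ((r : ℂ) / 2) * z) ^ (d - n - ν)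
                * Complex.exp (-(Complex.I * ((r : ℂ) / 2) * z)) ^ ν) := by
  set m := d - n with hmdef
  have hm1 : 1 ≤ m := by omega
  -- coefficient matrices
  set Cmat : ℕ → Matrix (Fin 2) (Fin 2) ℂ := fun i =>
    !![(1 + Complex.I * β (n + 1 + i)) / 2, Complex.I * γ (n + 1 + i) / 2;
      -(Complex.I * α (n + 1 + i)) / 2, (1 - Complex.I * β (n + 1 + i)) / 2] with hCmat
  obtain ⟨P, hP0, hPsym, hPprod⟩ := prodForm ((List.range m).map Cmat)
  have hlen : ((List.range m).map Cmat).length = m := by simp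
  rw [hlen] at hP0 hPsym hPprod
  refine ⟨fun a b ν => if ν = 0 then 0 else if ν = m then P m a b else P ν a b / 2, ?_⟩
  intro z a b
  have hprod : transferProd d r n α β γ z
      = ∑ ν ∈ Finset.range (m + 1),
          (Complex.exp (Complex.I * (((r : ℂ) / 2) * z)) ^ ν
            * Complex.exp (-(Complex.I * (((r : ℂ) / 2) * z))) ^ (m - ν)) • P ν := by
    rw [← hPprod (((r : ℂ) / 2) * z)]
    unfold transferProd
    rw [← hmdef, List.map_map]
    congr 1
    apply List.map_congr_left
    intro i _
    exact factor_eq r (α (n + 1 + i)) (β (n + 1 + i)) (γ (n + 1 + i)) z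
  set X := Complex.exp (Complex.I * ((r : ℂ) / 2) * z) with hXdef
  set Y := Complex.exp (-(Complex.I * ((r : ℂ) / 2) * z)) with hYdef
  have hX' : Complex.exp (Complex.I * (((r : ℂ) / 2) * z)) = X := by rw [hXdef]; ring_nf
  have hY' : Complex.exp (-(Complex.I * (((r : ℂ) / 2) * z))) = Y := by rw [hYdef]; ring_nf
  rw [hprod, hX', hY']
  -- entry of the sum
  rw [Matrix.sum_apply]
  simp only [Matrix.smul_apply, smul_eq_mul]
  -- now pure scalar identity
  set N : ℕ → ℂ := fun ν => if ν = 0 then 0 else if ν = m then P m a b else P ν a b / 2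
    with hNdef
  have hconjP : ∀ ν ≤ m, (starRingEnd ℂ) (P ν a b) = P (m - ν) a b := by
    intro ν hν
    have := hPsym ν hν
    have := congrFun (congrFun this a) b
    simpa [Matrix.map_apply] using this
  have key : ∀ ν ∈ Finset.range (m + 1), X ^ ν * Y ^ (m - ν) * P ν a b
      = X ^ ν * Y ^ (m - ν) * N ν + X ^ ν * Y ^ (m - ν) * (starRingEnd ℂ) (N (m - ν)) := by
    intro ν hν
    simp only [Finset.mem_range] at hν
    have hνm : ν ≤ m := by omega
    rw [← mul_add]
    congr 1
    rcases Nat.eq_zero_or_pos ν with h0 | h0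
    · subst h0
      have hN0 : N 0 = 0 := by simp [hNdef]
      have hNm : N m = P m a b := by
        simp only [hNdef, if_neg (by omega : m ≠ 0), if_pos rfl, if_true]
      have hc : (starRingEnd ℂ) (P m a b) = P 0 a b := by
        have := hconjP m le_rfl
        simpa using this
      simp only [Nat.sub_zero, hN0, hNm, zero_add, hc]
    · rcases eq_or_ne ν m with hem | hem
      · have hN0 : N 0 = 0 := by simp [hNdef]
        have hNm : N m = P m a b := by
          simp only [hNdef, if_neg (by omega : m ≠ 0), if_pos rfl, if_true]
        rw [hem, Nat.sub_self, hN0, hNm, map_zero, add_zero]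
      · have hlt : ν < m := lt_of_le_of_ne hνm hem
        have h1 : N ν = P ν a b / 2 := by
          simp only [hNdef, if_neg (by omega : ν ≠ 0), if_neg hem]
        have h2 : N (m - ν) = P (m - ν) a b / 2 := by
          simp only [hNdef, if_neg (by omega : m - ν ≠ 0), if_neg (by omega : m - ν ≠ m)]
        have h3 : (starRingEnd ℂ) (P (m - ν) a b) = P ν a b := by
          have := hconjP (m - ν) (by omega)
          rwa [Nat.sub_sub_self hνm] at this
        rw [h1, h2, map_div₀, h3, Complex.conj_ofNat 2]
        ring
  rw [Finset.sum_congr rfl key, Finset.sum_add_distrib]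
  have hRHS : ∑ ν ∈ Finset.Icc 1 m,
      (N ν * X ^ ν * Y ^ (m - ν) + (starRingEnd ℂ) (N ν) * X ^ (m - ν) * Y ^ ν)
      = ∑ ν ∈ Finset.Icc 1 m, N ν * X ^ ν * Y ^ (m - ν)
        + ∑ ν ∈ Finset.Icc 1 m, (starRingEnd ℂ) (N ν) * X ^ (m - ν) * Y ^ ν :=
    Finset.sum_add_distrib
  rw [hRHS]
  congr 1
  · -- first sums
    have hins : Finset.range (m + 1) = insert 0 (Finset.Icc 1 m) := by
      ext x; simp [Nat.lt_succ_iff]; omega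
    rw [hins, Finset.sum_insert (by simp)]
    have hN0 : N 0 = 0 := by simp [hNdef]
    rw [hN0, mul_zero, zero_add]
    exact Finset.sum_congr rfl fun ν _ => by ring
  · -- second sums
    have hins : Finset.range (m + 1) = insert m (Finset.range m) := by
      rw [Finset.range_add_one]
    rw [hins, Finset.sum_insert (by simp)]
    have hN0 : N (m - m) = 0 := by simp [hNdef]
    rw [hN0, map_zero, mul_zero, zero_add]
    refine Finset.sum_nbij' (fun ν => m - ν) (fun ν => m - ν) ?_ ?_ ?_ ?_ ?_
    · intro x hx
      simp only [Finset.mem_range] at hx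
      simp only [Finset.mem_Icc]
      omega
    · intro x hx
      simp only [Finset.mem_Icc] at hx
      simp only [Finset.mem_range]
      omega
    · intro x hx
      simp only [Finset.mem_range] at hx
      omega
    · intro x hx
      simp only [Finset.mem_Icc] at hx
      omega
    · intro x hx
      simp only [Finset.mem_range] at hx
      have h1 : m - (m - x) = x := by omega
      rw [h1]
      ring

end
end

section
/- If D_d(𝒞) ≠ 0, then the entire functions E_𝒞 and E_𝒞^♯ have no common zeros in ℂ; in particular, E_𝒞 has no real zeros. -/
open Complex Matrix Filter Topology
open scoped ComplexOrder

noncomputable section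

def Lv (d : ℕ) : ℤ := if Even d then d / 2 else d

def rv (d : ℕ) : ℤ := if Even d then 1 else 2

/-- The coefficient of `T^k` in `f_𝒞(T) = Σ_{j=0}^d C_{-(L-rj)} T^{d-j}` is `C_{L-rk}`. -/
def coeffC (d : ℕ) (C : ℤ → ℂ) : ℕ → ℂ := fun k => C (Lv d - rv d * k)

def SCM (a : ℕ → ℂ) (d n : ℕ) : Matrix (Fin n) (Fin n) ℂ :=
  Matrix.of fun j k => if (j : ℕ) ≤ (k : ℕ) then a (d - ((k : ℕ) - (j : ℕ))) else 0

def SCN (a : ℕ → ℂ) (n : ℕ) : Matrix (Fin n) (Fin n) ℂ :=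
  Matrix.of fun j k => if (j : ℕ) ≤ (k : ℕ) then a ((k : ℕ) - (j : ℕ)) else 0

def SCL (a : ℕ → ℂ) (d n : ℕ) (ε : ℂ) : Matrix (Fin n ⊕ Fin n) (Fin n ⊕ Fin n) ℂ :=
  Matrix.fromBlocks (SCM a d n)ᵀ (ε • (SCN a n)ᴴ) (ε • SCN a n)
    ((SCM a d n).map (starRingEnd ℂ))

def SCD (d : ℕ) (C : ℤ → ℂ) (n : ℕ) : ℂ :=
  if n = 0 then 1 else (SCL (coeffC d C) d n 1).det


/-- The exponential polynomial `E_𝒞(z) = Σ_{j=0}^d C_{L-rj} e^{i(L-rj)z}`. -/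
def Ecal (d : ℕ) (C : ℤ → ℂ) : ℂ → ℂ := fun z =>
  ∑ j ∈ Finset.range (d + 1),
    C (Lv d - rv d * j) * Complex.exp (Complex.I * ((Lv d - rv d * j : ℤ) : ℂ) * z)

/-- `E^♯(z) = conj(E(conj z))`. -/
def sharp (E : ℂ → ℂ) : ℂ → ℂ := fun z => (starRingEnd ℂ) (E ((starRingEnd ℂ) z))


section
open Polynomial
lemma helperA (p q : ℂ[X]) (d j : ℕ) (hj : j < d) :
    ∑ k ∈ Finset.range d, (if k ≤ j then p.coeff (j - k) else 0) * q.coeff k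
      = (p * q).coeff j := by
  have h1 : ∑ k ∈ Finset.range d, (if k ≤ j then p.coeff (j - k) else 0) * q.coeff k
      = ∑ k ∈ Finset.range (j+1), (if k ≤ j then p.coeff (j - k) else 0) * q.coeff k := by
    refine (Finset.sum_subset (Finset.range_subset_range.2 hj) ?_).symm
    intro k hk hk2
    simp only [Finset.mem_range] at hk hk2
    rw [if_neg (by omega), zero_mul]
  rw [h1, Polynomial.coeff_mul, Finset.Nat.sum_antidiagonal_eq_sum_range_succ_mk,
    ← Finset.sum_range_reflect (fun x => p.coeff x * q.coeff (j - x)) (j+1)]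
  apply Finset.sum_congr rfl
  intro k hk
  simp only [Finset.mem_range] at hk
  rw [if_pos (by omega)]
  have e1 : j + 1 - 1 - k = j - k := by omega
  have e2 : j - (j - k) = k := by omega
  rw [e1, e2]

lemma helperB (p q : ℂ[X]) (d j : ℕ) (hj : j < d)
    (hp : ∀ n, d < n → p.coeff n = 0) (hq : ∀ n, d ≤ n → q.coeff n = 0) :
    ∑ k ∈ Finset.range d, (if j ≤ k then p.coeff (d + j - k) else 0) * q.coeff k
      = (p * q).coeff (d + j) := by
  rw [Polynomial.coeff_mul, Finset.Nat.sum_antidiagonal_eq_sum_range_succ_mk,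
    ← Finset.sum_range_reflect (fun x => p.coeff x * q.coeff (d + j - x)) (d+j+1)]
  have h1 : ∑ k ∈ Finset.range (d+j+1),
        p.coeff (d+j+1-1-k) * q.coeff (d+j-(d+j+1-1-k))
      = ∑ k ∈ Finset.range d, p.coeff (d+j+1-1-k) * q.coeff (d+j-(d+j+1-1-k)) := by
    refine (Finset.sum_subset (Finset.range_subset_range.2 (by omega)) ?_).symm
    intro k hk hk2
    simp only [Finset.mem_range] at hk hk2
    have e : d + j - (d+j+1-1-k) = k := by omega
    rw [e, hq k (by omega), mul_zero]
  rw [h1]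
  apply Finset.sum_congr rfl
  intro k hk
  simp only [Finset.mem_range] at hk
  by_cases hjk : j ≤ k
  · rw [if_pos hjk]
    have e1 : d + j + 1 - 1 - k = d + j - k := by omega
    have e2 : d + j - (d + j - k) = k := by omega
    rw [e1, e2]
  · rw [if_neg hjk, hp (d+j+1-1-k) (by omega), zero_mul, zero_mul]

lemma sumpoly_coeff_le (d : ℕ) (a : ℕ → ℂ) (n : ℕ) (hn : n ≤ d) :
    (∑ m ∈ Finset.range (d+1), C (a m) * X ^ m).coeff n = a n := by
  rw [Polynomial.finset_sum_coeff]
  simp only [Polynomial.coeff_C_mul, Polynomial.coeff_X_pow, mul_ite, mul_one, mul_zero]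
  rw [Finset.sum_ite_eq (Finset.range (d+1)) n a]
  simp [Nat.lt_succ_of_le hn]

lemma sumpoly_coeff_gt (d : ℕ) (a : ℕ → ℂ) (n : ℕ) (hn : d < n) :
    (∑ m ∈ Finset.range (d+1), C (a m) * X ^ m).coeff n = 0 := by
  rw [Polynomial.finset_sum_coeff]
  apply Finset.sum_eq_zero
  intro m hm
  simp only [Finset.mem_range] at hm
  rw [Polynomial.coeff_C_mul, Polynomial.coeff_X_pow, if_neg (by omega), mul_zero]

lemma sumpoly_natDegree_le (d : ℕ) (a : ℕ → ℂ) :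
    (∑ m ∈ Finset.range (d+1), C (a m) * X ^ m).natDegree ≤ d := by
  apply Polynomial.natDegree_sum_le_of_forall_le
  intro m hm
  simp only [Finset.mem_range] at hm
  apply le_trans (Polynomial.natDegree_C_mul_le _ _)
  simpa [Polynomial.natDegree_X_pow] using Nat.lt_succ_iff.mp hm

open Polynomial in
lemma core_lemma (d : ℕ) (hd : 0 < d) (a : ℕ → ℂ) (had : a d ≠ 0)
    (hdet : (SCL a d d 1).det ≠ 0) (w : ℂ)
    (h1 : ∑ m ∈ Finset.range (d+1), a (d - m) * w ^ m = 0)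
    (h2 : ∑ m ∈ Finset.range (d+1), star (a m) * w ^ m = 0) : False := by
  classical
  set ftilc : ℕ → ℂ := fun m => a (d - m) with hftilc
  set fbarc : ℕ → ℂ := fun m => star (a m) with hfbarc
  set ftil : ℂ[X] := ∑ m ∈ Finset.range (d+1), C (ftilc m) * X ^ m with hftil
  set fbar : ℂ[X] := ∑ m ∈ Finset.range (d+1), C (fbarc m) * X ^ m with hfbar
  have heval1 : ftil.IsRoot w := by
    simp only [Polynomial.IsRoot, hftil, Polynomial.eval_finset_sum, Polynomial.eval_mul,
      Polynomial.eval_C, Polynomial.eval_pow, Polynomial.eval_X]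
    exact h1
  have heval2 : fbar.IsRoot w := by
    simp only [Polynomial.IsRoot, hfbar, Polynomial.eval_finset_sum, Polynomial.eval_mul,
      Polynomial.eval_C, Polynomial.eval_pow, Polynomial.eval_X]
    exact h2
  set g := ftil /ₘ (X - C w) with hgdef
  set h := fbar /ₘ (X - C w) with hhdef
  have hg : (X - C w) * g = ftil := (Polynomial.mul_divByMonic_eq_iff_isRoot).2 heval1
  have hh : (X - C w) * h = fbar := (Polynomial.mul_divByMonic_eq_iff_isRoot).2 heval2
  have hP : ftil * h = fbar * g := by rw [← hg, ← hh]; ring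
  have hftc : ∀ n, n ≤ d → ftil.coeff n = a (d - n) := by
    intro n hn; rw [hftil]; exact sumpoly_coeff_le d ftilc n hn
  have hftc0 : ∀ n, d < n → ftil.coeff n = 0 := by
    intro n hn; rw [hftil]; exact sumpoly_coeff_gt d ftilc n hn
  have hfbc : ∀ n, n ≤ d → fbar.coeff n = star (a n) := by
    intro n hn; rw [hfbar]; exact sumpoly_coeff_le d fbarc n hn
  have hfbc0 : ∀ n, d < n → fbar.coeff n = 0 := by
    intro n hn; rw [hfbar]; exact sumpoly_coeff_gt d fbarc n hn
  have hgc : ∀ n, d ≤ n → g.coeff n = 0 := by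
    intro n hn
    apply Polynomial.coeff_eq_zero_of_natDegree_lt
    have h1' := Polynomial.natDegree_divByMonic ftil (Polynomial.monic_X_sub_C w)
    have h2' : ftil.natDegree ≤ d := by rw [hftil]; exact sumpoly_natDegree_le d ftilc
    rw [hgdef, h1', Polynomial.natDegree_X_sub_C]
    omega
  have hhc : ∀ n, d ≤ n → h.coeff n = 0 := by
    intro n hn
    apply Polynomial.coeff_eq_zero_of_natDegree_lt
    have h1' := Polynomial.natDegree_divByMonic fbar (Polynomial.monic_X_sub_C w)
    have h2' : fbar.natDegree ≤ d := by rw [hfbar]; exact sumpoly_natDegree_le d fbarc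
    rw [hhdef, h1', Polynomial.natDegree_X_sub_C]
    omega
  have hfbne : fbar ≠ 0 := by
    intro h0
    apply had
    have := hfbc d le_rfl
    rw [h0, Polynomial.coeff_zero] at this
    simpa using this.symm
  have hhne : h ≠ 0 := by
    intro h0
    apply hfbne
    rw [← hh, h0, mul_zero]
  set v : Fin d ⊕ Fin d → ℂ :=
    Sum.elim (fun k : Fin d => h.coeff k) (fun k : Fin d => -(g.coeff k)) with hv
  have hmv : (SCL a d d 1).mulVec v = 0 := by
    funext i
    rcases i with j | j
    · have step : (SCL a d d 1).mulVec v (Sum.inl j) =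
          (∑ k ∈ Finset.range d, (if k ≤ (j:ℕ) then a (d - ((j:ℕ) - k)) else 0) * h.coeff k)
          + ∑ k ∈ Finset.range d,
              (if k ≤ (j:ℕ) then star (a ((j:ℕ) - k)) else 0) * (-(g.coeff k)) := by
        simp only [Matrix.mulVec, dotProduct, Fintype.sum_sum_type, SCL, SCM, SCN,
          Matrix.fromBlocks_apply₁₁, Matrix.fromBlocks_apply₁₂, Matrix.transpose_apply,
          Matrix.conjTranspose_apply, Matrix.smul_apply, one_smul, Matrix.map_apply,
          Matrix.of_apply, hv, Sum.elim_inl, Sum.elim_inr, smul_eq_mul, one_mul,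
          starRingEnd_apply, apply_ite (star : ℂ → ℂ), star_zero]
        rw [Fin.sum_univ_eq_sum_range
            (fun k => (if k ≤ (j:ℕ) then a (d - ((j:ℕ) - k)) else 0) * h.coeff k) d,
          Fin.sum_univ_eq_sum_range
            (fun k => (if k ≤ (j:ℕ) then star (a ((j:ℕ) - k)) else 0) * (-(g.coeff k))) d]
      rw [step]
      have e1 : ∑ k ∈ Finset.range d, (if k ≤ (j:ℕ) then a (d - ((j:ℕ) - k)) else 0) * h.coeff k
          = (ftil * h).coeff (j:ℕ) := by
        rw [← helperA ftil h d (j:ℕ) j.isLt]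
        apply Finset.sum_congr rfl
        intro k hk
        simp only [Finset.mem_range] at hk
        by_cases hkj : k ≤ (j:ℕ)
        · rw [if_pos hkj, if_pos hkj, hftc ((j:ℕ) - k) (by omega)]
        · rw [if_neg hkj, if_neg hkj]
      have e2 : ∑ k ∈ Finset.range d,
            (if k ≤ (j:ℕ) then star (a ((j:ℕ) - k)) else 0) * (-(g.coeff k))
          = -((fbar * g).coeff (j:ℕ)) := by
        rw [← helperA fbar g d (j:ℕ) j.isLt, ← Finset.sum_neg_distrib]
        apply Finset.sum_congr rfl
        intro k hk
        simp only [Finset.mem_range] at hk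
        by_cases hkj : k ≤ (j:ℕ)
        · rw [if_pos hkj, if_pos hkj, hfbc ((j:ℕ) - k) (by omega)]; ring
        · rw [if_neg hkj, if_neg hkj]; ring
      rw [e1, e2, hP, Pi.zero_apply]
      ring
    · have step : (SCL a d d 1).mulVec v (Sum.inr j) =
          (∑ k ∈ Finset.range d, (if (j:ℕ) ≤ k then a (k - (j:ℕ)) else 0) * h.coeff k)
          + ∑ k ∈ Finset.range d,
              (if (j:ℕ) ≤ k then star (a (d - (k - (j:ℕ)))) else 0) * (-(g.coeff k)) := by
        simp only [Matrix.mulVec, dotProduct, Fintype.sum_sum_type, SCL, SCM, SCN,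
          Matrix.fromBlocks_apply₂₁, Matrix.fromBlocks_apply₂₂, Matrix.transpose_apply,
          Matrix.conjTranspose_apply, Matrix.smul_apply, one_smul, Matrix.map_apply,
          Matrix.of_apply, hv, Sum.elim_inl, Sum.elim_inr, smul_eq_mul, one_mul,
          starRingEnd_apply, apply_ite (star : ℂ → ℂ), star_zero]
        rw [Fin.sum_univ_eq_sum_range
            (fun k => (if (j:ℕ) ≤ k then a (k - (j:ℕ)) else 0) * h.coeff k) d,
          Fin.sum_univ_eq_sum_range
            (fun k => (if (j:ℕ) ≤ k then star (a (d - (k - (j:ℕ)))) else 0) * (-(g.coeff k))) d]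
      rw [step]
      have e1 : ∑ k ∈ Finset.range d, (if (j:ℕ) ≤ k then a (k - (j:ℕ)) else 0) * h.coeff k
          = (ftil * h).coeff (d + (j:ℕ)) := by
        rw [← helperB ftil h d (j:ℕ) j.isLt hftc0 hhc]
        apply Finset.sum_congr rfl
        intro k hk
        simp only [Finset.mem_range] at hk
        by_cases hkj : (j:ℕ) ≤ k
        · rw [if_pos hkj, if_pos hkj, hftc (d + (j:ℕ) - k) (by omega)]
          congr 2
          omega
        · rw [if_neg hkj, if_neg hkj]
      have e2 : ∑ k ∈ Finset.range d,
            (if (j:ℕ) ≤ k then star (a (d - (k - (j:ℕ)))) else 0) * (-(g.coeff k))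
          = -((fbar * g).coeff (d + (j:ℕ))) := by
        rw [← helperB fbar g d (j:ℕ) j.isLt hfbc0 hgc, ← Finset.sum_neg_distrib]
        apply Finset.sum_congr rfl
        intro k hk
        simp only [Finset.mem_range] at hk
        by_cases hkj : (j:ℕ) ≤ k
        · rw [if_pos hkj, if_pos hkj, hfbc (d + (j:ℕ) - k) (by omega)]
          rw [show d + (j:ℕ) - k = d - (k - (j:ℕ)) by omega]; ring
        · rw [if_neg hkj, if_neg hkj]; ring
      rw [e1, e2, hP, Pi.zero_apply]
      ring
  have hv0 : v = 0 := Matrix.eq_zero_of_mulVec_eq_zero hdet hmv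
  have hhdeg : h.natDegree < d := by
    have h1' := Polynomial.natDegree_divByMonic fbar (Polynomial.monic_X_sub_C w)
    have h2' : fbar.natDegree ≤ d := by rw [hfbar]; exact sumpoly_natDegree_le d fbarc
    rw [hhdef, h1', Polynomial.natDegree_X_sub_C]
    by_cases h0 : fbar.natDegree = 0
    · omega
    · omega
  have := congrFun hv0 (Sum.inl ⟨h.natDegree, hhdeg⟩)
  simp only [hv, Sum.elim_inl, Pi.zero_apply] at this
  exact Polynomial.leadingCoeff_ne_zero.mpr hhne this

end

lemma Lv_sub_rv_mul (d : ℕ) : Lv d - rv d * (d:ℤ) = -(Lv d) := by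
  unfold Lv rv
  by_cases h : Even d
  · simp only [if_pos h]
    obtain ⟨k, hk⟩ := h
    subst hk
    push_cast
    omega
  · simp only [if_neg h]; ring


/-- Lemma 3.4 (1): if `D_d(𝒞) ≠ 0`, then `E_𝒞` and `E_𝒞^♯` have no common zeros;
in particular, `E_𝒞` has no real zeros. -/
theorem Ecal_no_common_zeros_of_SchurCohn_ne_zero
    (d : ℕ) (hd : 0 < d) (C : ℤ → ℂ) (hC : C (Lv d) * C (-(Lv d)) ≠ 0)
    (hD : SCD d C d ≠ 0) :
    (∀ z : ℂ, ¬(Ecal d C z = 0 ∧ sharp (Ecal d C) z = 0)) ∧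
    (∀ x : ℝ, Ecal d C (x : ℂ) ≠ 0) := by
  have hdet : (SCL (coeffC d C) d d 1).det ≠ 0 := by
    have e : SCD d C d = (SCL (coeffC d C) d d 1).det := if_neg (by omega)
    rwa [e] at hD
  have key : ∀ z : ℂ, Ecal d C z = 0 → sharp (Ecal d C) z = 0 → False := by
    intro z hE hEs
    set a : ℕ → ℂ := coeffC d C with ha
    set w : ℂ := Complex.exp (Complex.I * ((rv d : ℤ) : ℂ) * z) with hw
    have had : a d ≠ 0 := by
      intro h0
      apply hC
      rw [mul_eq_zero]
      right
      rw [← Lv_sub_rv_mul d]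
      simpa [ha, coeffC] using h0
    have hEsum : Complex.exp (Complex.I * ((rv d * d - Lv d : ℤ) : ℂ) * z) * Ecal d C z
        = ∑ j ∈ Finset.range (d+1), a j * w ^ (d - j) := by
      rw [Ecal, Finset.mul_sum]
      apply Finset.sum_congr rfl
      intro j hj
      simp only [Finset.mem_range, Nat.lt_succ_iff] at hj
      have harg : Complex.I * ((rv d * d - Lv d : ℤ):ℂ) * z
            + Complex.I * ((Lv d - rv d * (j:ℕ) : ℤ):ℂ) * z
          = ((d - j : ℕ):ℂ) * (Complex.I * ((rv d : ℤ):ℂ) * z) := by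
        rw [Nat.cast_sub hj]
        push_cast
        ring
      rw [mul_left_comm, ← Complex.exp_add, harg, Complex.exp_nat_mul, ← hw]
      simp [ha, coeffC]
    have h1 : ∑ m ∈ Finset.range (d+1), a (d - m) * w ^ m = 0 := by
      have hrefl : ∑ m ∈ Finset.range (d+1), a (d - m) * w ^ m
          = ∑ j ∈ Finset.range (d+1), a j * w ^ (d - j) := by
        rw [← Finset.sum_range_reflect (fun j => a j * w ^ (d - j)) (d+1)]
        apply Finset.sum_congr rfl
        intro m hm
        simp only [Finset.mem_range, Nat.lt_succ_iff] at hm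
        have e1 : d + 1 - 1 - m = d - m := by omega
        have e2 : d - (d - m) = m := by omega
        rw [e1, e2]
      rw [hrefl, ← hEsum, hE, mul_zero]
    have hsharp : sharp (Ecal d C) z
        = ∑ j ∈ Finset.range (d+1), star (C (Lv d - rv d * (j:ℕ)))
            * Complex.exp (-(Complex.I * ((Lv d - rv d * (j:ℕ) : ℤ) : ℂ) * z)) := by
      rw [sharp, Ecal, map_sum]
      apply Finset.sum_congr rfl
      intro j hj
      have harg : (starRingEnd ℂ) (Complex.I * ((Lv d - rv d * (j:ℕ) : ℤ):ℂ) * (starRingEnd ℂ) z)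
          = -(Complex.I * ((Lv d - rv d * (j:ℕ) : ℤ):ℂ) * z) := by
        rw [_root_.map_mul, _root_.map_mul, Complex.conj_conj, Complex.conj_I, map_intCast]
        ring
      rw [_root_.map_mul, ← Complex.exp_conj, harg, starRingEnd_apply]
    have hEsum2 : Complex.exp (Complex.I * ((Lv d : ℤ) : ℂ) * z) * sharp (Ecal d C) z
        = ∑ j ∈ Finset.range (d+1), star (a j) * w ^ j := by
      rw [hsharp, Finset.mul_sum]
      apply Finset.sum_congr rfl
      intro j hj
      have harg : Complex.I * ((Lv d : ℤ):ℂ) * z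
            + -(Complex.I * ((Lv d - rv d * (j:ℕ) : ℤ):ℂ) * z)
          = (j:ℂ) * (Complex.I * ((rv d : ℤ):ℂ) * z) := by
        push_cast
        ring
      rw [mul_left_comm, ← Complex.exp_add, harg, Complex.exp_nat_mul, ← hw]
      simp only [ha, coeffC]
    have h2 : ∑ m ∈ Finset.range (d+1), star (a m) * w ^ m = 0 := by
      rw [← hEsum2, hEs, mul_zero]
    exact core_lemma d hd a had hdet w h1 h2
  refine ⟨fun z hz => key z hz.1 hz.2, fun x hx => key x hx ?_⟩
  show (starRingEnd ℂ) (Ecal d C ((starRingEnd ℂ) (x:ℂ))) = 0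
  rw [Complex.conj_ofReal, hx, map_zero]


end
end

section
/- If the exponential polynomial E_𝒞 belongs to the Hermite–Biehler class ℍ𝔹, then D_d(𝒞) ≠ 0. -/
/-
Put `w = exp (-i r z)`, `f = f_𝒞` and `f* = T^d · conj (f (1 / conj T))`. Then
`E_𝒞 z = exp (i L z) f(w)` and `E_𝒞^♯ z = exp (i L z) f*(w)` (because `r d = 2 L`), while
`Im z > 0`, resp. `Im z = 0`, means `|w| > 1`, resp. `|w| = 1`. So `E_𝒞 ∈ ℍ𝔹` forces every root
of `f` into the open unit disc; the roots of `f*` are their reflections `1 / conj w`, hence `f`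
and `f*` are coprime. A kernel vector `(x, y)` of `L_d^+(f)` is exactly a relation
`f X + f* Y = 0` with `deg X, deg Y < d = deg f`, and coprimality forces `X = Y = 0`.
-/

open Complex Matrix Filter Topology
open scoped ComplexOrder

noncomputable section

/-- The Hermite–Biehler class: `|E^♯(z)| < |E(z)|` on the upper half-plane and no real zeros. -/
def HBclass (E : ℂ → ℂ) : Prop :=
  (∀ z : ℂ, 0 < z.im → ‖sharp E z‖ < ‖E z‖) ∧
  (∀ x : ℝ, E (x : ℂ) ≠ 0)

open Polynomial ComplexConjugate

def conjReciprocal (d : ℕ) (g : ℂ[X]) : ℂ[X] := reflect d (g.map (starRingEnd ℂ))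

lemma coeff_conjReciprocal (d : ℕ) (g : ℂ[X]) (i : ℕ) :
    (conjReciprocal d g).coeff i = conj (g.coeff (revAt d i)) := by
  simp [conjReciprocal, coeff_reflect]

lemma eval_conjReciprocal {g : ℂ[X]} {d : ℕ} (hg : g.natDegree ≤ d) {w : ℂ} (hw : w ≠ 0) :
    (conjReciprocal d g).eval w = w ^ d * conj (g.eval (conj w)⁻¹) := by
  let := invertibleOfNonzero (inv_ne_zero hw)
  have h := eval₂_reflect_mul_pow (RingHom.id ℂ) w⁻¹ d (g.map conj) (natDegree_map_le.trans hg)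
  rw [invOf_eq_inv, inv_inv, eval₂_id, eval₂_id, eval_map] at h
  have hconj : conj (g.eval (conj w)⁻¹) = g.eval₂ conj w⁻¹ := by
    rw [eval, hom_eval₂, map_inv₀, Complex.conj_conj, RingHom.comp_id]
  rw [hconj, ← h, conjReciprocal, mul_left_comm, ← mul_pow, mul_inv_cancel₀ hw, one_pow, mul_one]

lemma isCoprime_conjReciprocal {g : ℂ[X]} {d : ℕ} (hg : g.degree = d)
    (hroots : ∀ w : ℂ, 1 ≤ ‖w‖ → g.eval w ≠ 0) : IsCoprime g (conjReciprocal d g) := by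
  have hgd : g.natDegree = d := natDegree_eq_of_degree_eq_some hg
  rw [isCoprime_iff_aeval_ne_zero_of_isAlgClosed ℂ ℂ]
  intro w
  simp only [coe_aeval_eq_eval]
  refine or_iff_not_imp_left.mpr fun hgw => ?_
  have hw : ‖w‖ < 1 := not_le.mp fun h => hroots w h (not_not.mp hgw)
  rcases eq_or_ne w 0 with rfl | hw0
  · rw [← coeff_zero_eq_eval_zero, coeff_conjReciprocal, revAt_zero, _root_.map_ne_zero, ← hgd,
      coeff_natDegree, leadingCoeff_ne_zero]
    rintro rfl
    simp at hg
  · rw [eval_conjReciprocal hgd.le hw0]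
    refine mul_ne_zero (pow_ne_zero _ hw0) ((_root_.map_ne_zero _).mpr (hroots _ ?_))
    rw [norm_inv, Complex.norm_conj]
    exact one_le_inv₀ (norm_pos_iff.mpr hw0) |>.mpr hw.le

lemma coeff_mul_ofFn_rev {R : Type*} [CommSemiring R] [DecidableEq R] {n : ℕ}
    (q : R[X]) (x : Fin n → R) (p : ℕ) :
    (q * ofFn n (x ∘ Fin.rev)).coeff p =
      ∑ k : Fin n, (if n - 1 - k ≤ p then q.coeff (p - (n - 1 - k)) else 0) * x k := by
  rw [ofFn_eq_sum_monomial, Finset.mul_sum, finsetSum_coeff, ← Equiv.sum_comp Fin.revPerm]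
  refine Finset.sum_congr rfl fun k _ => ?_
  simp only [Fin.revPerm_apply, Function.comp_apply, Fin.rev_rev, ← C_mul_X_pow_eq_monomial,
    ← mul_assoc, coeff_mul_X_pow', coeff_mul_C, Fin.val_rev, ite_mul, zero_mul]
  rw [Nat.sub_sub, Nat.add_comm 1]

section SchurCohn

variable {g : ℂ[X]} {d : ℕ}

lemma SCM_transpose_apply (hg : g.natDegree ≤ d) (j k : Fin d) :
    (SCM g.coeff d d)ᵀ j k = g.coeff (d + k - j) := by
  simp only [transpose_apply, SCM, of_apply]
  split_ifs
  · congr 1; omega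
  · exact (coeff_eq_zero_of_natDegree_lt (by omega)).symm

lemma conjTranspose_SCN_apply (hg : g.natDegree ≤ d) (j k : Fin d) :
    (SCN g.coeff d)ᴴ j k = (conjReciprocal d g).coeff (d + k - j) := by
  simp only [conjTranspose_apply, SCN, of_apply, coeff_conjReciprocal]
  split_ifs
  · rw [revAt_le (by omega)]; congr 2; omega
  · rw [revAt_eq_self_of_lt (by omega), coeff_eq_zero_of_natDegree_lt (by omega)]; simp

lemma conj_SCM_apply (j k : Fin d) :
    conj (SCM g.coeff d d j k) =
      if (j : ℕ) ≤ k then (conjReciprocal d g).coeff (k - j) else 0 := by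
  simp only [SCM, of_apply, coeff_conjReciprocal]
  split_ifs
  · rw [revAt_le (by omega)]
  · simp

/- Row `inr j` of `SCL` computes the coefficient of `T ^ (d - 1 - j)` of the left-hand side and
row `inl j` that of `T ^ (2 * d - 1 - j)`; the coefficients from `T ^ (2 * d)` on vanish by
degree. -/
lemma mul_add_mul_eq_zero_of_SCL_mulVec_eq_zero (hg : g.natDegree ≤ d) {x y : Fin d → ℂ}
    (h : SCL g.coeff d d 1 *ᵥ Sum.elim x y = 0) :
    g * ofFn d (x ∘ Fin.rev) + conjReciprocal d g * ofFn d (y ∘ Fin.rev) = 0 := by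
  rw [SCL, one_smul, one_smul, fromBlocks_mulVec] at h
  have hl (j : Fin d) : ∑ k : Fin d, g.coeff (d + k - j) * x k +
      ∑ k : Fin d, (conjReciprocal d g).coeff (d + k - j) * y k = 0 := by
    simpa only [Sum.elim_inl, Sum.elim_inr, Pi.add_apply, Pi.zero_apply, Function.comp_apply,
      mulVec, dotProduct, SCM_transpose_apply hg, conjTranspose_SCN_apply hg]
      using congrFun h (Sum.inl j)
  have hr (j : Fin d) : ∑ k : Fin d, (if (j : ℕ) ≤ k then g.coeff (k - j) else 0) * x k +
      ∑ k : Fin d, (if (j : ℕ) ≤ k then (conjReciprocal d g).coeff (k - j) else 0) * y k = 0 := by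
    simpa only [Sum.elim_inl, Sum.elim_inr, Pi.add_apply, Pi.zero_apply, Function.comp_apply,
      mulVec, dotProduct, SCN, of_apply, map_apply, conj_SCM_apply]
      using congrFun h (Sum.inr j)
  have hg' : (conjReciprocal d g).natDegree ≤ d := natDegree_reflect_le.trans (by simp [hg])
  ext p
  rw [coeff_add, coeff_mul_ofFn_rev, coeff_mul_ofFn_rev, coeff_zero]
  rcases lt_or_ge p d with hp | hp
  · obtain ⟨j, rfl⟩ : ∃ j : Fin d, p = d - 1 - j := ⟨⟨d - 1 - p, by omega⟩, by simp; omega⟩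
    convert hr j using 2 <;> refine Finset.sum_congr rfl fun k _ => ?_ <;> have := k.isLt <;>
      congr 1 <;> split_ifs <;> first | rfl | (congr 1; omega)
  rcases lt_or_ge p (2 * d) with hp' | hp'
  · obtain ⟨j, rfl⟩ : ∃ j : Fin d, p = 2 * d - 1 - j := ⟨⟨2 * d - 1 - p, by omega⟩, by simp; omega⟩
    convert hl j using 2 <;> refine Finset.sum_congr rfl fun k _ => ?_ <;> have := k.isLt <;>
      rw [if_pos (by omega)] <;> congr 2 <;> omega
  · have vanish (q : ℂ[X]) (hq : q.natDegree ≤ d) (z : Fin d → ℂ) :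
        ∑ k : Fin d, (if d - 1 - k ≤ p then q.coeff (p - (d - 1 - k)) else 0) * z k = 0 :=
      Finset.sum_eq_zero fun k _ => by
        have := k.isLt
        rw [if_pos (by omega), coeff_eq_zero_of_natDegree_lt (by omega), zero_mul]
    rw [vanish g hg, vanish _ hg', add_zero]

theorem det_SCL_ne_zero_of_isCoprime (hg : g.degree = d)
    (hcop : IsCoprime g (conjReciprocal d g)) : (SCL g.coeff d d 1).det ≠ 0 := by
  intro hdet
  obtain ⟨v, hv0, hv⟩ := exists_mulVec_eq_zero_iff.mpr hdet
  rw [← Sum.elim_comp_inl_inr v] at hv0 hv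
  set P := ofFn d ((v ∘ Sum.inl) ∘ Fin.rev)
  set Q := ofFn d ((v ∘ Sum.inr) ∘ Fin.rev)
  have hg0 : g ≠ 0 := fun h => by simp [h] at hg
  have hPQ : g * P + conjReciprocal d g * Q = 0 :=
    mul_add_mul_eq_zero_of_SCL_mulVec_eq_zero (natDegree_le_of_degree_le hg.le) hv
  have hQ : Q = 0 := by
    have hgQ : g ∣ Q := hcop.dvd_of_dvd_mul_left ⟨-P, by linear_combination hPQ⟩
    by_contra hQ
    exact (degree_le_of_dvd hgQ hQ).not_gt (hg ▸ ofFn_degree_lt _)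
  have hP : P = 0 := by
    rw [hQ, mul_zero, add_zero] at hPQ
    exact (mul_eq_zero.mp hPQ).resolve_left hg0
  have hrev {w : Fin d → ℂ} (hw : ofFn d (w ∘ Fin.rev) = 0) : w = 0 := by
    have := injective_ofFn d (hw.trans (ofFn_zero d).symm)
    funext k
    simpa using congrFun this (Fin.rev k)
  exact hv0 (by rw [hrev hP, hrev hQ, Sum.elim_zero_zero])

end SchurCohn

lemma rv_pos (d : ℕ) : 0 < rv d := by
  unfold rv; split <;> norm_num

lemma rv_mul_eq_two_mul_Lv (d : ℕ) : rv d * d = 2 * Lv d := by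
  unfold rv Lv
  split_ifs with h
  · obtain ⟨m, rfl⟩ := h
    push_cast
    omega
  · ring

lemma coeffC_self (d : ℕ) (C : ℤ → ℂ) : coeffC d C d = C (-Lv d) := by
  unfold coeffC
  congr 1
  linarith [rv_mul_eq_two_mul_Lv d]

lemma norm_exp_neg_I_mul (r : ℝ) (z : ℂ) : ‖cexp (-(I * r * z))‖ = Real.exp (r * z.im) := by
  rw [Complex.norm_exp]
  congr 1
  simp

lemma exists_exp_neg_I_mul_eq {r : ℝ} (hr : r ≠ 0) {w : ℂ} (hw : w ≠ 0) :
    ∃ z : ℂ, cexp (-(I * r * z)) = w :=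
  ⟨I * Complex.log w / r, by
    rw [show -(I * r * (I * Complex.log w / r)) = Complex.log w by field_simp; simp]
    exact Complex.exp_log hw⟩

def fCal (d : ℕ) (C : ℤ → ℂ) : ℂ[X] := ofFn (d + 1) fun k => coeffC d C k

section Ecal

variable {d : ℕ} {C : ℤ → ℂ}

lemma coeff_fCal (k : ℕ) : (fCal d C).coeff k = if k ≤ d then coeffC d C k else 0 := by
  split_ifs with hk
  · exact ofFn_coeff_eq_val_of_lt _ (by omega)
  · exact ofFn_coeff_eq_zero_of_ge _ (by omega)

lemma natDegree_fCal_le : (fCal d C).natDegree ≤ d :=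
  Nat.lt_succ_iff.mp (ofFn_natDegree_lt (Nat.le_add_left 1 d) _)

lemma degree_fCal (hC : C (-Lv d) ≠ 0) : (fCal d C).degree = d :=
  degree_eq_of_le_of_coeff_ne_zero (degree_le_of_natDegree_le natDegree_fCal_le)
    (by rwa [coeff_fCal, if_pos le_rfl, coeffC_self])

lemma SCL_coeffC (ε : ℂ) : SCL (coeffC d C) d d ε = SCL (fCal d C).coeff d d ε := by
  have hM : SCM (coeffC d C) d d = SCM (fCal d C).coeff d d := by
    ext j k
    simp only [SCM, of_apply, coeff_fCal, if_pos (Nat.sub_le _ _)]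
  have hN : SCN (coeffC d C) d = SCN (fCal d C).coeff d := by
    ext j k
    simp only [SCN, of_apply, coeff_fCal, if_pos (show (k : ℕ) - j ≤ d by omega)]
  rw [SCL, SCL, hM, hN]

lemma Ecal_eq_exp_mul_eval_fCal (z : ℂ) :
    Ecal d C z = cexp (I * Lv d * z) * (fCal d C).eval (cexp (-(I * rv d * z))) := by
  rw [eval_eq_sum_range' (p := fCal d C) (n := d + 1) (Nat.lt_succ_of_le natDegree_fCal_le),
    Finset.mul_sum]
  refine Finset.sum_congr rfl fun j hj => ?_
  rw [coeff_fCal, if_pos (Finset.mem_range_succ_iff.mp hj), coeffC, ← Complex.exp_nat_mul,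
    mul_left_comm, ← Complex.exp_add]
  congr 2
  push_cast
  ring

lemma sharp_Ecal_eq_exp_mul_eval (z : ℂ) :
    sharp (Ecal d C) z =
      cexp (I * Lv d * z) * (conjReciprocal d (fCal d C)).eval (cexp (-(I * rv d * z))) := by
  set w := cexp (-(I * rv d * z))
  have hinv : (conj w)⁻¹ = cexp (-(I * rv d * conj z)) := by
    rw [← Complex.exp_conj, ← Complex.exp_neg]
    congr 1
    simp
  have hpow : w ^ d * cexp (I * Lv d * z) = conj (cexp (I * Lv d * conj z)) := by
    rw [← Complex.exp_nat_mul, ← Complex.exp_add, ← Complex.exp_conj]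
    congr 1
    have h : (rv d : ℂ) * d = 2 * Lv d := by exact_mod_cast rv_mul_eq_two_mul_Lv d
    simp only [map_mul, map_intCast, Complex.conj_I, Complex.conj_conj]
    linear_combination (-(I * z)) * h
  rw [sharp, Ecal_eq_exp_mul_eval_fCal, map_mul, ← hinv,
    eval_conjReciprocal natDegree_fCal_le (Complex.exp_ne_zero _), ← hpow]
  ring

lemma HBclass.eval_fCal_ne_zero (hHB : HBclass (Ecal d C)) {w : ℂ}
    (hw : 1 ≤ ‖w‖) : (fCal d C).eval w ≠ 0 := by
  have hr : (0 : ℝ) < rv d := by exact_mod_cast rv_pos d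
  obtain ⟨z, rfl⟩ := exists_exp_neg_I_mul_eq hr.ne' (norm_pos_iff.mp (one_pos.trans_le hw))
  rw [norm_exp_neg_I_mul, Real.one_le_exp_iff] at hw
  have him : 0 ≤ z.im := nonneg_of_mul_nonneg_right hw hr
  push_cast
  intro h0
  rcases him.lt_or_eq with him | him
  · have := hHB.1 z him
    rw [sharp_Ecal_eq_exp_mul_eval, Ecal_eq_exp_mul_eval_fCal, h0, mul_zero, norm_zero] at this
    exact this.not_ge (norm_nonneg _)
  · apply hHB.2 z.re
    rw [show (z.re : ℂ) = z from Complex.ext rfl (by simp [him]), Ecal_eq_exp_mul_eval_fCal, h0,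
      mul_zero]

end Ecal

theorem SchurCohn_ne_zero_of_HB_general
    (d : ℕ) (C : ℤ → ℂ) (hC : C (Lv d) * C (-(Lv d)) ≠ 0)
    (hHB : HBclass (Ecal d C)) :
    SCD d C d ≠ 0 := by
  rcases eq_or_ne d 0 with rfl | hd
  · simp [SCD]
  have hdeg := degree_fCal (right_ne_zero_of_mul hC)
  rw [SCD, if_neg hd, SCL_coeffC]
  exact det_SCL_ne_zero_of_isCoprime hdeg
    (isCoprime_conjReciprocal hdeg fun _ => hHB.eval_fCal_ne_zero)

/-- Lemma 3.4 (2): if the exponential polynomial `E_𝒞` belongs to the Hermite–Biehler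
class `ℍ𝔹`, then `D_d(𝒞) ≠ 0`. -/
theorem SchurCohn_ne_zero_of_HB
    (d : ℕ) (hd : 0 < d) (C : ℤ → ℂ) (hC : C (Lv d) * C (-(Lv d)) ≠ 0)
    (hHB : HBclass (Ecal d C)) :
    SCD d C d ≠ 0 :=
  SchurCohn_ne_zero_of_HB_general d C hC hHB

end
end

section
/- For every d ∈ ℤ_{>0} and all nonzero real numbers γ₁, ..., γ_d, the matrix product identity ∏_{k=1}^{d} [[1, iγ_k],[−i/γ_k, 1]] · ᵗ(1, 0) = (γ₁γ₂···γ_d)^{−1} · ᵗ( γ₁·(γ₁+γ₂)(γ₂+γ₃)···(γ_{d−1}+γ_d), −i·(γ₁+γ₂)(γ₂+γ₃)···(γ_{d−1}+γ_d) ) holds, where the product of matrices is taken in the order k = 1, 2, ..., d and the products (γ₁+γ₂)···(γ_{d−1}+γ_d) are interpreted as the empty product 1 when d = 1. -/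
/-! Each factor sends a vector of the shape `(h, -i)` to a multiple of `(g, -i)`:
`[[1, i g], [-i/g, 1]] (h, -i) = ((g + h) / g) (g, -i)`. Multiplying out the product from the
left, the image of `(1, 0)` is therefore a multiple of `(γ₁, -i)`, and each further factor
contributes `(γ_k + γ_{k+1}) / γ_k` to the scalar. -/

open Complex Matrix Finset

noncomputable section

theorem Finset.prod_Icc_one_eq_prod_range {M : Type*} [CommMonoid M] (f : ℕ → M) (n : ℕ) :
    ∏ k ∈ Icc 1 n, f k = ∏ k ∈ range n, f (k + 1) := by
  rw [range_eq_Ico, prod_Ico_add' f 0 n 1, zero_add, Ico_add_one_right_eq_Icc]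

def gammaMatrix (g : ℂ) : Matrix (Fin 2) (Fin 2) ℂ := !![1, I * g; -I / g, 1]

theorem gammaMatrix_mulVec_e1 {g : ℂ} (hg : g ≠ 0) :
    gammaMatrix g *ᵥ ![1, 0] = g⁻¹ • ![g, -I] := by
  ext i; fin_cases i
  · simp [gammaMatrix, mulVec, hg]
  · simp [gammaMatrix, mulVec]; ring

theorem gammaMatrix_mulVec {g : ℂ} (hg : g ≠ 0) (h : ℂ) :
    gammaMatrix g *ᵥ ![h, -I] = ((g + h) / g) • ![g, -I] := by
  ext i; fin_cases i
  · simp [gammaMatrix, mulVec, hg]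
    linear_combination (-g) * I_sq
  · simp [gammaMatrix, mulVec]
    field_simp
    ring

theorem prod_gammaMatrix_mulVec_e1 (n : ℕ) (γ : ℕ → ℂ) (hγ : ∀ k ≤ n, γ k ≠ 0) :
    ((List.range (n + 1)).map (fun k => gammaMatrix (γ k))).prod *ᵥ ![1, 0]
      = ((∏ k ∈ range n, (γ k + γ (k + 1))) / ∏ k ∈ range (n + 1), γ k) • ![γ 0, -I] := by
  induction n generalizing γ with
  | zero => simpa [div_eq_inv_mul] using gammaMatrix_mulVec_e1 (hγ 0 le_rfl)
  | succ n ih =>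
    have hγ0 := hγ 0 (Nat.zero_le _)
    rw [List.range_succ_eq_map, List.map_cons, List.prod_cons, List.map_map, ← mulVec_mulVec,
      show (fun k => gammaMatrix (γ k)) ∘ Nat.succ = fun k => gammaMatrix (γ (k + 1)) from rfl,
      ih (fun k => γ (k + 1)) fun k hk => hγ (k + 1) (by omega), mulVec_smul,
      gammaMatrix_mulVec hγ0, smul_smul, prod_range_succ' (fun k => γ k + γ (k + 1)),
      prod_range_succ' γ (n + 1)]
    congr 1
    field_simp

/-- The matrix product identity
`∏_{k=1}^d [[1, iγ_k],[−i/γ_k, 1]]·ᵗ(1,0)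
  = (γ₁⋯γ_d)⁻¹·ᵗ(γ₁(γ₁+γ₂)(γ₂+γ₃)⋯(γ_{d−1}+γ_d), −i(γ₁+γ₂)(γ₂+γ₃)⋯(γ_{d−1}+γ_d))`,
where the product over `k` is taken in the order `k = 1, 2, …, d` and empty products are `1`. -/
theorem gamma_matrix_product_identity
    (d : ℕ) (hd : 0 < d) (γ : ℕ → ℝ) (hγ : ∀ k, 1 ≤ k → k ≤ d → γ k ≠ 0) :
    (((List.range d).map (fun i =>
        (!![1, Complex.I * (γ (i + 1) : ℂ); -Complex.I / (γ (i + 1) : ℂ), 1] :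
          Matrix (Fin 2) (Fin 2) ℂ))).prod).mulVec ![1, 0]
      = (∏ k ∈ Finset.Icc 1 d, (γ k : ℂ))⁻¹ •
          ![(γ 1 : ℂ) * ∏ k ∈ Finset.Icc 1 (d - 1), ((γ k : ℂ) + (γ (k + 1) : ℂ)),
            -Complex.I * ∏ k ∈ Finset.Icc 1 (d - 1), ((γ k : ℂ) + (γ (k + 1) : ℂ))] := by
  obtain ⟨n, rfl⟩ : ∃ n, d = n + 1 := ⟨d - 1, by omega⟩
  refine (prod_gammaMatrix_mulVec_e1 n (fun k => (γ (k + 1) : ℂ))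
    fun k hk => ofReal_ne_zero.mpr (hγ (k + 1) (by omega) (by omega))).trans ?_
  rw [Nat.add_sub_cancel, prod_Icc_one_eq_prod_range, prod_Icc_one_eq_prod_range]
  ext i
  fin_cases i <;> simp [div_eq_inv_mul] <;> ring

end
end
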